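/- There exists a 6-voter, 8-candidate profile V under 4-Approval with fixed tie-breaking, and a GS-game at V in which each of the three GS-manipulators has exactly two strategies (sincere vote and one minimal GS-manipulation), such that the game has no pure-strategy Nash equilibrium. Concretely: candidates {w, d1, d2, d3, d, e, c, x} with tie-break w > d1 > d2 > d3 > c > d > e > x; sincere approvals (top 4): u1: {w,d1,e,c}, u2: {c,d2,d,d3}, u3: {d,d3,c,d2}, v1: {d1,w,d,d3}, v2: {d2,w,d1,x}, v3: {d3,w,d2,d1}; full rankings as in the paper; the GS-manipulators are v1, v2, v3 with minimal manipulations i1 = v1 with w replaced by c (making d1 win), i2 = v2 with {w,d1} replaced by {c,d} (making d2 win), i3 = v3 with {w,d2,d1} replaced by {d,x,e} (making d3 win); the winners of the 8 strategy profiles are: (s,s,s)→w, (i,s,s)→d1, (s,i,s)→d2, (s,s,i)→d3, (i,s,i)→d3, (s,i,i)→d, (i,i,s)→c, (i,i,i)→c, and every strategy profile admits a profitable unilateral deviation. -/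
import Mathlib


def approvalScore {C : Type*} [Fintype C] [DecidableEq C] {n : ℕ} (k : ℕ)
    (V : Fin n → C → ℕ) (c : C) : ℕ :=
  (Finset.univ.filter fun i => V i c < k).card

def IsWinner {C : Type*} [Fintype C] [DecidableEq C] {n : ℕ} (k : ℕ)
    (V : Fin n → C → ℕ) (tb : C → ℕ) (w : C) : Prop :=
  ∀ c, c ≠ w → approvalScore k V c < approvalScore k V w ∨
    (approvalScore k V c = approvalScore k V w ∧ tb w < tb c)

open scoped Classical in
noncomputable def winner {C : Type*} [Fintype C] [DecidableEq C] [Nonempty C] {n : ℕ} (k : ℕ)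
    (V : Fin n → C → ℕ) (tb : C → ℕ) : C :=
  if h : ∃ w, IsWinner k V tb w then h.choose else Classical.arbitrary C

/- Candidates w=0, d1=1, d2=2, d3=3, c=4, d=5, e=6, x=7 (tie-break by index).
Votes are position functions (candidate ↦ position, top 4 approved):
  u1 = w d1 e c | d x d2 d3,   u2 = c d2 d d3 | w e x d1,
  u3 = d d3 c d2 | w d1 e x,   v1 = d1 w d d3 | c d2 e x,
  v2 = d2 w d1 x | c d d3 e,   v3 = d3 w d2 d1 | d x e c,
  i1 = v1[w;c],  i2 = v2[w d1; c d],  i3 = v3[w d2 d1; d x e]. -/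
def pu1 : Fin 8 → ℕ := ![0,1,6,7,3,4,2,5]
def pu2 : Fin 8 → ℕ := ![4,7,1,3,0,2,5,6]
def pu3 : Fin 8 → ℕ := ![4,5,3,1,2,0,6,7]
def pv1 : Fin 8 → ℕ := ![1,0,5,3,4,2,6,7]
def pv2 : Fin 8 → ℕ := ![1,2,0,6,4,5,7,3]
def pv3 : Fin 8 → ℕ := ![1,3,2,0,7,4,6,5]
def pi1 : Fin 8 → ℕ := ![4,0,5,3,1,2,6,7]
def pi2 : Fin 8 → ℕ := ![4,5,0,6,1,2,7,3]
def pi3 : Fin 8 → ℕ := ![4,6,5,0,7,1,3,2]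

def tb15 : Fin 8 → ℕ := fun c => (c : ℕ)

def V15 : Fin 6 → Fin 8 → ℕ := ![pu1, pu2, pu3, pv1, pv2, pv3]

/-- Strategy profile: `bj = true` means manipulator `vj` plays his minimal
manipulation `ij`, `false` means he plays his sincere vote. -/
def P15 (b1 b2 b3 : Bool) : Fin 6 → Fin 8 → ℕ :=
  ![pu1, pu2, pu3, cond b1 pi1 pv1, cond b2 pi2 pv2, cond b3 pi3 pv3]

lemma score_update {C : Type*} [Fintype C] [DecidableEq C] {n : ℕ} (k : ℕ)
    (V : Fin n → C → ℕ) (i : Fin n) (v' : C → ℕ) (c : C) :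
    approvalScore k (Function.update V i v') c =
      (if v' c < k then 1 else 0) +
        ((Finset.univ.erase i).filter fun j => V j c < k).card := by
  unfold approvalScore
  conv_lhs => rw [← Finset.insert_erase (Finset.mem_univ i), Finset.filter_insert]
  have h1 : ∀ j ∈ Finset.univ.erase i,
      ((Function.update V i v') j c < k ↔ V j c < k) := by
    intro j hj
    rw [Function.update_of_ne (Finset.ne_of_mem_erase hj)]
  rw [Finset.filter_congr h1]
  simp only [Function.update_self]
  split
  · rw [Finset.card_insert_of_notMem (by simp)]; omega
  · omega

lemma winner_unique {C : Type*} [Fintype C] [DecidableEq C] {n : ℕ} {k : ℕ}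
    {V : Fin n → C → ℕ} {tb : C → ℕ} {w1 w2 : C}
    (h1 : IsWinner k V tb w1) (h2 : IsWinner k V tb w2) : w1 = w2 := by
  by_contra hne
  rcases h1 w2 (Ne.symm hne) with h | ⟨h, h'⟩ <;>
    rcases h2 w1 hne with g | ⟨g, g'⟩ <;> omega

lemma winner_eq {C : Type*} [Fintype C] [DecidableEq C] [Nonempty C] {n : ℕ} {k : ℕ}
    {V : Fin n → C → ℕ} {tb : C → ℕ} {w : C}
    (h : IsWinner k V tb w) : winner k V tb = w := by
  have he : ∃ w', IsWinner k V tb w' := ⟨w, h⟩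
  rw [winner, dif_pos he]
  exact winner_unique he.choose_spec h

lemma aux_w (i : Fin 6) (hi : i = 1 ∨ i = 2) :
    ((Finset.univ.erase i).filter fun j => V15 j 0 < 4).card = 4 := by
  rcases hi with rfl | rfl <;> decide

lemma aux_mid (i : Fin 6) (hi : i = 1 ∨ i = 2) (x : Fin 8)
    (hx : x = 2 ∨ x = 3 ∨ x = 4 ∨ x = 5) :
    ((Finset.univ.erase i).filter fun j => V15 j x < 4).card ≤ 3 := by
  rcases hi with rfl | rfl <;> rcases hx with rfl | rfl | rfl | rfl <;> decide

lemma hT000 : IsWinner 4 (P15 false false false) tb15 0 := by unfold IsWinner; decide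
lemma hT100 : IsWinner 4 (P15 true false false) tb15 1 := by unfold IsWinner; decide
lemma hT010 : IsWinner 4 (P15 false true false) tb15 2 := by unfold IsWinner; decide
lemma hT001 : IsWinner 4 (P15 false false true) tb15 3 := by unfold IsWinner; decide
lemma hT101 : IsWinner 4 (P15 true false true) tb15 3 := by unfold IsWinner; decide
lemma hT011 : IsWinner 4 (P15 false true true) tb15 5 := by unfold IsWinner; decide
lemma hT110 : IsWinner 4 (P15 true true false) tb15 4 := by unfold IsWinner; decide
lemma hT111 : IsWinner 4 (P15 true true true) tb15 4 := by unfold IsWinner; decide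

lemma no_manip (i : Fin 6) (hi : i = 1 ∨ i = 2) (v' : Fin 8 → ℕ) (x : Fin 8)
    (hx : IsWinner 4 (Function.update V15 i v') tb15 x)
    (hlt : V15 i x < V15 i 0) : False := by
  have hmem : x = 2 ∨ x = 3 ∨ x = 4 ∨ x = 5 := by
    rcases hi with rfl | rfl <;> fin_cases x <;> revert hlt <;> decide
  have hne : (0 : Fin 8) ≠ x := by
    rcases hmem with rfl | rfl | rfl | rfl <;> decide
  rcases hx 0 hne with h | ⟨-, h⟩
  · rw [score_update, score_update, aux_w i hi] at h
    have hb := aux_mid i hi x hmem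
    split_ifs at h <;> omega
  · exact absurd h (Nat.not_lt_zero _)

/-- A 4-Approval GS-game on 6 voters and 8 candidates in which the three
GS-manipulators are v1, v2, v3 (voters 3, 4, 5), each with his sincere vote
and one minimal GS-manipulation, whose winner table is as claimed, and which
has no pure-strategy Nash equilibrium. -/
theorem stmt15 :
    -- the GS-manipulators at V are exactly v1, v2, v3
    (∀ i : Fin 6,
      (∃ v' : Fin 8 → ℕ, Function.Injective v' ∧
        IsWinner 4 V15 tb15 0 ∧
        ∃ x : Fin 8, IsWinner 4 (Function.update V15 i v') tb15 x ∧
          V15 i x < V15 i 0) ↔ (3 ≤ (i : ℕ))) ∧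
    -- winner table
    IsWinner 4 (P15 false false false) tb15 0 ∧   -- w
    IsWinner 4 (P15 true false false) tb15 1 ∧    -- d1
    IsWinner 4 (P15 false true false) tb15 2 ∧    -- d2
    IsWinner 4 (P15 false false true) tb15 3 ∧    -- d3
    IsWinner 4 (P15 true false true) tb15 3 ∧     -- d3
    IsWinner 4 (P15 false true true) tb15 5 ∧     -- d
    IsWinner 4 (P15 true true false) tb15 4 ∧     -- c
    IsWinner 4 (P15 true true true) tb15 4 ∧      -- c
    -- no pure-strategy Nash equilibrium
    ¬ ∃ b1 b2 b3 : Bool,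
      (∀ b1' : Bool,
        ¬ pv1 (winner 4 (P15 b1' b2 b3) tb15) < pv1 (winner 4 (P15 b1 b2 b3) tb15)) ∧
      (∀ b2' : Bool,
        ¬ pv2 (winner 4 (P15 b1 b2' b3) tb15) < pv2 (winner 4 (P15 b1 b2 b3) tb15)) ∧
      (∀ b3' : Bool,
        ¬ pv3 (winner 4 (P15 b1 b2 b3') tb15) < pv3 (winner 4 (P15 b1 b2 b3) tb15)) := by
  refine ⟨?_, hT000, hT100, hT010, hT001, hT101, hT011, hT110, hT111, ?_⟩
  · intro i
    constructor
    · rintro ⟨v', hinj, hw, x, hx, hlt⟩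
      fin_cases i
      · exact absurd hlt (show ¬ V15 0 x < V15 0 0 from Nat.not_lt_zero _)
      · exact absurd (no_manip 1 (Or.inl rfl) v' x hx hlt) (fun h => h)
      · exact absurd (no_manip 2 (Or.inr rfl) v' x hx hlt) (fun h => h)
      · decide
      · decide
      · decide
    · intro hi
      fin_cases i
      · exact absurd hi (by decide)
      · exact absurd hi (by decide)
      · exact absurd hi (by decide)
      · refine ⟨pi1, by decide, by unfold IsWinner; decide, 1, ?_, by decide⟩
        have he : Function.update V15 3 pi1 = P15 true false false := by
          funext j c; fin_cases j <;> rfl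
        show IsWinner 4 (Function.update V15 3 pi1) tb15 1
        rw [he]; exact hT100
      · refine ⟨pi2, by decide, by unfold IsWinner; decide, 2, ?_, by decide⟩
        have he : Function.update V15 4 pi2 = P15 false true false := by
          funext j c; fin_cases j <;> rfl
        show IsWinner 4 (Function.update V15 4 pi2) tb15 2
        rw [he]; exact hT010
      · refine ⟨pi3, by decide, by unfold IsWinner; decide, 3, ?_, by decide⟩
        have he : Function.update V15 5 pi3 = P15 false false true := by
          funext j c; fin_cases j <;> rfl
        show IsWinner 4 (Function.update V15 5 pi3) tb15 3
        rw [he]; exact hT001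
  · have w000 := winner_eq hT000
    have w100 := winner_eq hT100
    have w010 := winner_eq hT010
    have w001 := winner_eq hT001
    have w101 := winner_eq hT101
    have w011 := winner_eq hT011
    have w110 := winner_eq hT110
    have w111 := winner_eq hT111
    rintro ⟨b1, b2, b3, h1, h2, h3⟩
    rcases b1 <;> rcases b2 <;> rcases b3
    · exact h1 true (by rw [w100, w000]; decide)
    · exact h2 true (by rw [w011, w001]; decide)
    · exact h1 true (by rw [w110, w010]; decide)
    · exact h3 false (by rw [w010, w011]; decide)
    · exact h3 true (by rw [w101, w100]; decide)
    · exact h2 true (by rw [w111, w101]; decide)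
    · exact h2 false (by rw [w100, w110]; decide)
    · exact h1 false (by rw [w011, w111]; decide)
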